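/- arXiv:1609.00424 — 3 statements merged into one kernel-verified Lean document; each statement's English description precedes it below -/
import Mathlib

section
/- For any real λ with 0 < λ < 1 and any positive integer y, the Borel–Tanner distribution p(z | y) = (y · z^{z-y-1} · λ^{z-y} · e^{-zλ}) / (z-y)! for integers z ≥ y sums to 1 over z, i.e., ∑_{z=y}^∞ (y · z^{z-y-1} · λ^{z-y} · e^{-zλ}) / (z-y)! = 1. -/
/-!
Write `c_k = a (a + k)^(k - 1) / k!` with `a = y`. Expanding `e^(-(a + k)λ)` in its Taylor
series turns the sum into a double series in which the coefficient of `λ^n` is `a / n!` times the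
`n`-th finite difference of the polynomial `k ↦ (a + k)^(n - 1)`, so it vanishes for `n ≥ 1`. For
`λ ≤ 1/10` the double series converges absolutely, so the sum is `1` there.

Since `c_k ≤ e^(a + k)`, the power series `F(x) = ∑ c_k x^k` has radius at least
`e^(-1) > λ e^(-λ)` for `0 < λ < 1`. Hence the sum equals `e^(-aλ) F(λ e^(-λ))`, which is
analytic in `λ` on `(0, 1)`, and the identity theorem propagates the value `1` to all of `(0, 1)`.
-/

open Real Finset Set
open scoped Nat

theorem sum_range_neg_one_pow_mul_choose_mul_add_pow_eq_zero {R : Type*} [CommRing R]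
    {j n : ℕ} (h : j < n) (b : R) :
    ∑ k ∈ range (n + 1), (-1 : R) ^ (n - k) * n.choose k * (b + k) ^ j = 0 := by
  have := congr_fun (fwdDiff_iter_pow_eq_zero_of_lt (R := R) h) b
  rw [fwdDiff_iter_eq_sum_shift] at this
  simpa [zsmul_eq_mul] using this

theorem HasSum.sum_antidiagonal {α : Type*} [AddCommMonoid α] [TopologicalSpace α]
    [ContinuousAdd α] [RegularSpace α] {f : ℕ × ℕ → α} {a : α} (hf : HasSum f a) :
    HasSum (fun n ↦ ∑ kl ∈ antidiagonal n, f kl) a :=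
  (HasAntidiagonal.sigmaAntidiagonalEquivProd.hasSum_iff.mpr hf).sigma fun n ↦
    (antidiagonal n).hasSum f

theorem Real.hasSum_pow_div_factorial (x : ℝ) : HasSum (fun n ↦ x ^ n / n !) (exp x) :=
  Real.exp_eq_exp_ℝ ▸ NormedSpace.expSeries_div_hasSum_exp x

theorem Real.mul_exp_neg_lt_exp_neg_one {t : ℝ} (ht : t ≠ 1) : t * exp (-t) < exp (-1) := by
  have h_lt : t < exp (t - 1) := by simpa using add_one_lt_exp (sub_ne_zero.mpr ht)
  have h_mul_lt : t * exp (-t) < exp (t - 1) * exp (-t) := by gcongr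
  simpa [← exp_add, sub_add_eq_add_sub] using h_mul_lt

namespace BorelTanner

open FormalMultilinearSeries

variable {a : ℝ}

noncomputable def coeff (a : ℝ) (k : ℕ) : ℝ := a * (a + k) ^ ((k : ℤ) - 1) / k !

lemma coeff_zero (ha : a ≠ 0) : coeff a 0 = 1 := by
  simp [coeff, ha]

lemma coeff_nonneg (ha : 0 ≤ a) (k : ℕ) : 0 ≤ coeff a k := by
  unfold coeff; positivity

lemma coeff_le_exp (ha : 0 < a) (k : ℕ) : coeff a k ≤ exp (a + k) := by
  have hak : 0 < a + k := by positivity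
  calc coeff a k = a / (a + k) * ((a + k) ^ k / k !) := by
        rw [coeff, zpow_sub_one₀ hak.ne', zpow_natCast]; ring
    _ ≤ 1 * exp (a + k) := by
        gcongr
        · exact (div_le_one hak).mpr (by simp)
        · exact pow_div_factorial_le_exp _ hak.le k
    _ = exp (a + k) := one_mul _

noncomputable def doubleTerm (a lam : ℝ) (p : ℕ × ℕ) : ℝ :=
  coeff a p.1 * lam ^ p.1 * ((-(a + p.1) * lam) ^ p.2 / p.2 !)

lemma doubleTerm_mk_sub (ha : 0 < a) (lam : ℝ) {k n : ℕ} (hk : k ≤ n) (hn : 1 ≤ n) :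
    doubleTerm a lam (k, n - k)
      = a * lam ^ n / n ! * ((-1) ^ (n - k) * n.choose k * (a + k) ^ (n - 1)) := by
  have hak : a + k ≠ 0 := by positivity
  have hpow : (a + k) ^ ((k : ℤ) - 1) * (a + k) ^ (n - k) = (a + k) ^ (n - 1) := by
    rw [← zpow_natCast, ← zpow_natCast, ← zpow_add₀ hak]
    congr 1; omega
  have hlam : lam ^ k * lam ^ (n - k) = lam ^ n := by rw [← pow_add, Nat.add_sub_cancel' hk]
  rw [doubleTerm, Nat.cast_choose ℝ hk, coeff, neg_mul, neg_pow, mul_pow, ← hpow, ← hlam]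
  field_simp

lemma sum_antidiagonal_doubleTerm (ha : 0 < a) (lam : ℝ) (n : ℕ) :
    ∑ p ∈ antidiagonal n, doubleTerm a lam p = if n = 0 then 1 else 0 := by
  rcases Nat.eq_zero_or_pos n with rfl | hn
  · simp [doubleTerm, coeff_zero ha.ne']
  rw [if_neg hn.ne', Nat.sum_antidiagonal_eq_sum_range_succ_mk]
  calc ∑ k ∈ range (n + 1), doubleTerm a lam (k, n - k)
      = ∑ k ∈ range (n + 1),
          a * lam ^ n / n ! * ((-1) ^ (n - k) * n.choose k * (a + k) ^ (n - 1)) :=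
        sum_congr rfl fun k hk ↦
          doubleTerm_mk_sub ha lam (Nat.lt_succ_iff.mp (mem_range.mp hk)) hn
    _ = 0 := by
        rw [← mul_sum, sum_range_neg_one_pow_mul_choose_mul_add_pow_eq_zero (by omega), mul_zero]

lemma hasSum_doubleTerm_fiber (a lam : ℝ) (k : ℕ) :
    HasSum (fun m ↦ doubleTerm a lam (k, m)) (coeff a k * lam ^ k * exp (-(a + k) * lam)) :=
  (Real.hasSum_pow_div_factorial _).mul_left _

lemma summable_norm_doubleTerm (ha : 0 < a) {lam : ℝ} (h0 : 0 ≤ lam) (h1 : lam ≤ 1 / 10) :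
    Summable fun p ↦ ‖doubleTerm a lam p‖ := by
  have hnorm : ∀ k m, ‖doubleTerm a lam (k, m)‖
      = coeff a k * lam ^ k * (((a + k) * lam) ^ m / m !) := fun k m ↦ by
    rw [doubleTerm, norm_mul, norm_mul, norm_div, norm_pow, norm_pow, neg_mul, norm_neg,
      Real.norm_of_nonneg (coeff_nonneg ha.le k), Real.norm_of_nonneg h0,
      Real.norm_of_nonneg (by positivity), Real.norm_natCast]
  have hfiber : ∀ k, HasSum (fun m ↦ ‖doubleTerm a lam (k, m)‖)
      (coeff a k * lam ^ k * exp ((a + k) * lam)) := fun k ↦ by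
    simpa only [hnorm] using (Real.hasSum_pow_div_factorial _).mul_left _
  have hratio : lam * exp (1 + lam) < 1 := by
    have : exp (1 + lam) < 10 := by
      calc exp (1 + lam) ≤ exp 1 * exp 1 := by rw [← exp_add]; gcongr; linarith
        _ < 10 := by nlinarith [exp_one_lt_d9, exp_pos 1]
    nlinarith [exp_pos (1 + lam)]
  have hbound : ∀ k, coeff a k * lam ^ k * exp ((a + k) * lam)
      ≤ exp (a + a * lam) * (lam * exp (1 + lam)) ^ k := fun k ↦ by
    calc coeff a k * lam ^ k * exp ((a + k) * lam)
        ≤ exp (a + k) * lam ^ k * exp ((a + k) * lam) := by gcongr; exact coeff_le_exp ha k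
      _ = exp (a + a * lam) * (lam * exp (1 + lam)) ^ k := by
        have hexp : exp (a + k) * exp ((a + k) * lam)
            = exp (a + a * lam) * exp (k * (1 + lam)) := by
          rw [← exp_add, ← exp_add]; ring_nf
        rw [mul_pow, ← exp_nat_mul]
        linear_combination lam ^ k * hexp
  rw [summable_prod_of_nonneg fun _ ↦ norm_nonneg _]
  refine ⟨fun k ↦ (hfiber k).summable, ?_⟩
  refine Summable.of_nonneg_of_le (fun k ↦ ?_) (fun k ↦ ?_)
    ((summable_geometric_of_lt_one (by positivity) hratio).mul_left (exp (a + a * lam)))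
  · exact tsum_nonneg fun _ ↦ norm_nonneg _
  · rw [(hfiber k).tsum_eq]; exact hbound k

theorem hasSum_of_le_one_div_ten (ha : 0 < a) {lam : ℝ} (h0 : 0 ≤ lam) (h1 : lam ≤ 1 / 10) :
    HasSum (fun k ↦ coeff a k * lam ^ k * exp (-(a + k) * lam)) 1 := by
  have hF := (summable_norm_doubleTerm ha h0 h1).of_norm.hasSum
  have hone : ∑' p, doubleTerm a lam p = 1 := by
    have := hF.sum_antidiagonal
    simp only [sum_antidiagonal_doubleTerm ha] at this
    exact this.unique (hasSum_ite_eq 0 1)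
  exact hone ▸ hF.prod_fiberwise (hasSum_doubleTerm_fiber a lam)

lemma exp_neg_one_le_radius (ha : 0 < a) :
    ((exp (-1)).toNNReal : ENNReal) ≤ (ofScalars ℝ (coeff a)).radius := by
  refine le_radius_of_bound _ (exp a) fun n ↦ ?_
  rw [ofScalars_norm, Real.norm_of_nonneg (coeff_nonneg ha.le n),
    Real.coe_toNNReal _ (exp_pos _).le]
  calc coeff a n * exp (-1) ^ n ≤ exp (a + n) * exp (-1) ^ n := by
        gcongr; exact coeff_le_exp ha n
    _ = exp a := by rw [← exp_nat_mul, ← exp_add]; ring_nf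

lemma mem_eball_radius (ha : 0 < a) {x : ℝ} (hx : |x| < exp (-1)) :
    x ∈ Metric.eball (0 : ℝ) (ofScalars ℝ (coeff a)).radius := by
  refine mem_eball_zero_iff.mpr (lt_of_lt_of_le ?_ (exp_neg_one_le_radius ha))
  rw [enorm_eq_nnnorm, ENNReal.coe_lt_coe, ← NNReal.coe_lt_coe, coe_nnnorm,
    Real.coe_toNNReal _ (exp_pos _).le, Real.norm_eq_abs]
  exact hx

lemma hasSum_coeff_mul_pow (ha : 0 < a) {x : ℝ} (hx : |x| < exp (-1)) :
    HasSum (fun k ↦ coeff a k * x ^ k) (ofScalarsSum (coeff a) x) := by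
  have h := (ofScalars ℝ (coeff a)).hasSum (mem_eball_radius ha hx)
  simp only [ofScalars_apply_eq, smul_eq_mul] at h
  exact h

noncomputable def totalMass (a lam : ℝ) : ℝ :=
  exp (-(a * lam)) * ofScalarsSum (coeff a) (lam * exp (-lam))

lemma abs_mul_exp_neg_lt {lam : ℝ} (h0 : 0 < lam) (h1 : lam < 1) :
    |lam * exp (-lam)| < exp (-1) := by
  rw [abs_of_pos (by positivity)]
  exact mul_exp_neg_lt_exp_neg_one h1.ne

lemma hasSum_totalMass (ha : 0 < a) {lam : ℝ} (h0 : 0 < lam) (h1 : lam < 1) :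
    HasSum (fun k ↦ coeff a k * lam ^ k * exp (-(a + k) * lam)) (totalMass a lam) := by
  refine ((hasSum_coeff_mul_pow ha (abs_mul_exp_neg_lt h0 h1)).mul_left
    (exp (-(a * lam)))).congr_fun fun k ↦ ?_
  have hexp : exp (-(a + k) * lam) = exp (-(a * lam)) * exp (k * -lam) := by
    rw [← exp_add]; ring_nf
  rw [mul_pow, ← exp_nat_mul, hexp]
  ring

lemma analyticOnNhd_totalMass (ha : 0 < a) : AnalyticOnNhd ℝ (totalMass a) (Ioo 0 1) := by
  intro lam hlam
  have hmem := mem_eball_radius ha (abs_mul_exp_neg_lt hlam.1 hlam.2)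
  have hsum : AnalyticAt ℝ (ofScalarsSum (coeff a)) (lam * exp (-lam)) :=
    ((ofScalars ℝ (coeff a)).hasFPowerSeriesOnBall
      (pos_of_gt (mem_eball_zero_iff.mp hmem))).analyticAt_of_mem hmem
  have hinner : AnalyticAt ℝ (fun t ↦ t * exp (-t)) lam := by fun_prop
  have houter : AnalyticAt ℝ (fun t ↦ exp (-(a * t))) lam := by fun_prop
  exact houter.mul (hsum.comp (f := fun t ↦ t * exp (-t)) hinner)

lemma totalMass_eq_one (ha : 0 < a) : EqOn (totalMass a) 1 (Ioo 0 1) := by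
  refine (analyticOnNhd_totalMass ha).eqOn_of_preconnected_of_eventuallyEq analyticOnNhd_const
    isPreconnected_Ioo (z₀ := 1 / 20) (by norm_num) ?_
  filter_upwards [Ioo_mem_nhds (by norm_num : (0 : ℝ) < 1 / 20)
    (by norm_num : (1 / 20 : ℝ) < 1 / 10)] with t ht
  exact (hasSum_totalMass ha ht.1 (by linarith [ht.2])).unique
    (hasSum_of_le_one_div_ten ha ht.1.le ht.2.le)

theorem hasSum_borelTanner (ha : 0 < a) {lam : ℝ} (h0 : 0 < lam) (h1 : lam < 1) :
    HasSum (fun k ↦ coeff a k * lam ^ k * exp (-(a + k) * lam)) 1 := by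
  simpa [totalMass_eq_one ha ⟨h0, h1⟩] using hasSum_totalMass ha h0 h1

end BorelTanner

/-- The Borel–Tanner distribution sums to 1: for `0 < λ < 1` and `y ≥ 1`,
`∑_{z=y}^∞ y z^{z-y-1} λ^{z-y} e^{-zλ} / (z-y)! = 1`, where the sum is indexed by
`z = y + k`, `k ∈ ℕ`, and the (possibly negative) exponent `z - y - 1 = k - 1` is
an integer power. -/
theorem stmt1 (lam : ℝ) (h0 : 0 < lam) (h1 : lam < 1) (y : ℕ) (hy : 1 ≤ y) :
    ∑' k : ℕ,
      (y : ℝ) * ((y : ℝ) + k) ^ ((k : ℤ) - 1) * lam ^ k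
        * Real.exp (-(((y : ℝ) + k)) * lam) / (Nat.factorial k) = 1 := by
  have hy' : (0 : ℝ) < y := by exact_mod_cast hy
  rw [← (BorelTanner.hasSum_borelTanner hy' h0 h1).tsum_eq]
  exact tsum_congr fun k ↦ by rw [BorelTanner.coeff]; ring
end

section
/- Let λ ∈ (0,1) and let X be a random variable on the nonnegative integers with P(X=0) = e^{-λ}, P(X=1) = λe^{-λ}, and P(X=x) = ((x-1)^{x-2} / (x·(x-2)!)) λ^x e^{-xλ} for x ≥ 2. Then E[X²] = ((1 - λ + λ²)/(1-λ)²) · E[X] = ((1 - λ + λ²)/(1-λ)³) · λ e^{-λ}. -/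
/-!
Put `z = λ e^{-λ}` and `G(w) = ∑ m^m / m! · w^m`, a power series of radius `1/e`. With `x = m + 1`
one has `x² P(X = x) = z (1 + m) (m^m / m!) z^m`, so `E[X²] = z (G(z) + z G'(z))`.

For small `λ`, expanding each `e^{-mλ}` and collecting powers of `λ` is legitimate (absolute
convergence needs `λ e^{1+λ} < 1`), and the coefficient of `λ^n` is `Δⁿ[xⁿ](0) / n! = 1`. Hence
`G(λ e^{-λ}) = 1/(1-λ)` near `0`, and then on all of `(0,1)` by analytic continuation, because
`λ e^{-λ} < 1/e` there. Differentiating this identity in `λ` gives `z G'(z) = λ/(1-λ)³`.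
-/

open Finset Real Filter Topology

noncomputable def selfPowCoeff (m : ℕ) : ℝ := (m : ℝ) ^ m / m.factorial

lemma selfPowCoeff_nonneg (m : ℕ) : 0 ≤ selfPowCoeff m := by
  unfold selfPowCoeff; positivity

lemma selfPowCoeff_le_exp_one_pow (m : ℕ) : selfPowCoeff m ≤ exp 1 ^ m := by
  rw [← exp_nat_mul, mul_one]
  exact pow_div_factorial_le_exp _ (Nat.cast_nonneg m) m

lemma summable_pow_mul_selfPowCoeff_mul_pow (k : ℕ) {w : ℝ} (hw : |w| < exp (-1)) :
    Summable fun m : ℕ => (m : ℝ) ^ k * selfPowCoeff m * w ^ m := by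
  have hew : exp 1 * |w| < 1 := calc
    exp 1 * |w| < exp 1 * exp (-1) := by gcongr
    _ = 1 := by rw [← exp_add]; norm_num
  refine .of_norm_bounded (summable_pow_mul_geometric_of_norm_lt_one k (r := exp 1 * |w|)
    (by rwa [norm_of_nonneg (by positivity)])) fun m => ?_
  rw [norm_mul, norm_mul, norm_pow, norm_pow, Real.norm_natCast, Real.norm_eq_abs, Real.norm_eq_abs,
    abs_of_nonneg (selfPowCoeff_nonneg m), mul_pow, mul_assoc]
  gcongr
  exact selfPowCoeff_le_exp_one_pow m

lemma sum_range_neg_one_pow_mul_choose_mul_pow (n : ℕ) :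
    ∑ k ∈ range (n + 1), (-1 : ℝ) ^ (n - k) * n.choose k * (k : ℝ) ^ n = n.factorial := by
  have h := congrFun (fwdDiff_iter_eq_factorial (R := ℝ) (n := n)) 0
  rw [fwdDiff_iter_eq_sum_shift] at h
  simpa [zsmul_eq_mul] using h

lemma sum_antidiagonal_selfPowCoeff_mul_neg_pow_div_factorial (n : ℕ) :
    ∑ p ∈ antidiagonal n, selfPowCoeff p.1 * ((-p.1 : ℝ) ^ p.2 / p.2.factorial) = 1 := by
  have hn : (n.factorial : ℝ) ≠ 0 := by positivity
  calc ∑ p ∈ antidiagonal n, selfPowCoeff p.1 * ((-p.1 : ℝ) ^ p.2 / p.2.factorial)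
      = ∑ k ∈ range (n + 1), (-1 : ℝ) ^ (n - k) * n.choose k * (k : ℝ) ^ n / n.factorial := by
        rw [Nat.sum_antidiagonal_eq_sum_range_succ_mk]
        refine sum_congr rfl fun k hk => ?_
        have hkn : k ≤ n := Nat.lt_succ_iff.mp (mem_range.mp hk)
        have hpow : (k : ℝ) ^ n = k ^ k * k ^ (n - k) := by
          rw [← pow_add, Nat.add_sub_cancel' hkn]
        rw [selfPowCoeff, Nat.cast_choose ℝ hkn, neg_pow, hpow]
        field_simp
    _ = 1 := by rw [← sum_div, sum_range_neg_one_pow_mul_choose_mul_pow, div_self hn]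

theorem Summable.tsum_eq_tsum_sum_antidiagonal {α : Type*} [AddCommMonoid α] [TopologicalSpace α]
    [ContinuousAdd α] [T3Space α] {A : Type*} [AddCommMonoid A] [HasAntidiagonal A]
    {f : A × A → α} (hf : Summable f) :
    ∑' p, f p = ∑' n, ∑ p ∈ antidiagonal n, f p := by
  have hσ := (HasAntidiagonal.sigmaAntidiagonalEquivProd.summable_iff (f := f)).mpr hf
  rw [← HasAntidiagonal.sigmaAntidiagonalEquivProd.tsum_eq f]
  exact (hσ.tsum_sigma' fun n => (hasSum_fintype _).summable).trans
    (tsum_congr fun n => (tsum_fintype _).trans (sum_finset_coe (fun p => f p) _))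

lemma Real.hasSum_pow_div_factorial_s3 (y : ℝ) :
    HasSum (fun j : ℕ => y ^ j / j.factorial) (exp y) := by
  rw [exp_eq_exp_ℝ]
  exact NormedSpace.expSeries_div_hasSum_exp y

lemma tsum_selfPowCoeff_mul_pow_of_small {x : ℝ} (hx0 : 0 ≤ x) (hx : x * exp (1 + x) < 1) :
    ∑' m, selfPowCoeff m * (x * exp (-x)) ^ m = (1 - x)⁻¹ := by
  set f : ℕ × ℕ → ℝ :=
    fun p => selfPowCoeff p.1 * ((-p.1 : ℝ) ^ p.2 / p.2.factorial) * x ^ (p.1 + p.2) with hf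
  have hfiber (m : ℕ) : HasSum (fun j => f (m, j)) (selfPowCoeff m * (x * exp (-x)) ^ m) := by
    have h := (hasSum_pow_div_factorial_s3 (-m * x)).mul_left (selfPowCoeff m * x ^ m)
    rw [mul_assoc, neg_mul, ← mul_neg, exp_nat_mul, ← mul_pow] at h
    exact h.congr_fun fun j => by rw [hf]; ring
  have hnorm (p : ℕ × ℕ) :
      ‖f p‖ = selfPowCoeff p.1 * x ^ p.1 * ((p.1 * x) ^ p.2 / p.2.factorial) := by
    simp only [hf, norm_mul, norm_div, norm_pow, norm_neg, Real.norm_eq_abs, Nat.abs_cast,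
      abs_of_nonneg hx0, abs_of_nonneg (selfPowCoeff_nonneg _)]
    ring
  have hsum : Summable f := by
    refine .of_norm ((summable_prod_of_nonneg fun p => norm_nonneg _).mpr ⟨fun m => ?_, ?_⟩)
    · simp only [hnorm]
      exact ((hasSum_pow_div_factorial_s3 _).mul_left _).summable
    · have hw : |x * exp x| < exp (-1) := calc
        |x * exp x| = x * exp (1 + x) * exp (-1) := by
          rw [abs_of_nonneg (by positivity), mul_assoc, ← exp_add]; ring_nf
        _ < 1 * exp (-1) := by gcongr
        _ = exp (-1) := one_mul _
      refine (summable_pow_mul_selfPowCoeff_mul_pow 0 hw).congr fun m => ?_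
      simp only [hnorm]
      rw [((hasSum_pow_div_factorial_s3 _).mul_left _).tsum_eq, mul_pow, ← exp_nat_mul]
      ring
  calc ∑' m, selfPowCoeff m * (x * exp (-x)) ^ m = ∑' m, ∑' j, f (m, j) :=
        tsum_congr fun m => (hfiber m).tsum_eq.symm
    _ = ∑' p, f p := hsum.tsum_prod.symm
    _ = ∑' n, ∑ p ∈ antidiagonal n, f p := hsum.tsum_eq_tsum_sum_antidiagonal
    _ = ∑' n, x ^ n := tsum_congr fun n => by
        rw [← mul_one (x ^ n), ← sum_antidiagonal_selfPowCoeff_mul_neg_pow_div_factorial n, mul_sum]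
        refine sum_congr rfl fun p hp => ?_
        rw [hf, ← mem_antidiagonal.mp hp]; ring
    _ = (1 - x)⁻¹ := tsum_geometric_of_lt_one hx0 (by
        nlinarith [add_one_le_exp (1 + x)])

noncomputable def selfPowSeries : FormalMultilinearSeries ℝ ℝ ℝ :=
  FormalMultilinearSeries.ofScalars ℝ selfPowCoeff

lemma selfPowSeries_sum (w : ℝ) : selfPowSeries.sum w = ∑' m, selfPowCoeff m * w ^ m :=
  FormalMultilinearSeries.ofScalars_sum_eq selfPowCoeff w

lemma exp_neg_one_le_radius_selfPowSeries :
    ENNReal.ofReal (exp (-1)) ≤ selfPowSeries.radius := by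
  refine selfPowSeries.le_radius_of_bound 1 (r := (exp (-1)).toNNReal) fun n => ?_
  rw [selfPowSeries, FormalMultilinearSeries.ofScalars_norm, Real.norm_eq_abs,
    abs_of_nonneg (selfPowCoeff_nonneg n), Real.coe_toNNReal _ (exp_pos _).le, ← exp_nat_mul]
  calc selfPowCoeff n * exp (n * -1) ≤ exp 1 ^ n * exp (n * -1) := by
        gcongr; exact selfPowCoeff_le_exp_one_pow n
    _ = 1 := by rw [← exp_nat_mul, ← exp_add]; simp

lemma analyticOnNhd_tsum_selfPowCoeff_mul_pow :
    AnalyticOnNhd ℝ (fun w => ∑' m, selfPowCoeff m * w ^ m) (Metric.ball 0 (exp (-1))) := by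
  simp only [← selfPowSeries_sum]
  refine selfPowSeries.analyticOnNhd.mono fun w hw => ?_
  rw [Metric.mem_eball, edist_dist]
  exact (ENNReal.ofReal_lt_ofReal_iff (exp_pos _)).mpr hw |>.trans_le
    exp_neg_one_le_radius_selfPowSeries

lemma abs_mul_exp_neg_lt {x : ℝ} (hx : x ∈ Set.Ioo 0 1) : |x * exp (-x)| < exp (-1) := by
  have h : x < exp (x - 1) := by
    simpa using add_one_lt_exp (sub_ne_zero.mpr hx.2.ne)
  rw [abs_of_pos (by have := hx.1; positivity)]
  calc x * exp (-x) < exp (x - 1) * exp (-x) := by gcongr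
    _ = exp (-1) := by rw [← exp_add]; ring_nf

theorem tsum_selfPowCoeff_mul_pow {x : ℝ} (hx : x ∈ Set.Ioo 0 1) :
    ∑' m, selfPowCoeff m * (x * exp (-x)) ^ m = (1 - x)⁻¹ := by
  have hlhs : AnalyticOnNhd ℝ (fun x => ∑' m, selfPowCoeff m * (x * exp (-x)) ^ m)
      (Set.Ioo 0 1) := fun y hy => by
    have hz : AnalyticAt ℝ (fun x : ℝ => x * exp (-x)) y := by fun_prop
    exact (analyticOnNhd_tsum_selfPowCoeff_mul_pow _
      (mem_ball_zero_iff.mpr (abs_mul_exp_neg_lt hy))).comp (f := fun x => x * exp (-x)) hz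
  have hrhs : AnalyticOnNhd ℝ (fun x : ℝ => (1 - x)⁻¹) (Set.Ioo 0 1) := fun y hy =>
    (analyticAt_const.sub analyticAt_id).inv (sub_ne_zero.mpr hy.2.ne')
  have hsmall : (fun x => ∑' m, selfPowCoeff m * (x * exp (-x)) ^ m) =ᶠ[𝓝 (1 / 18)]
      fun x => (1 - x)⁻¹ := by
    filter_upwards [Ioo_mem_nhds (by norm_num : (0 : ℝ) < 1 / 18)
      (by norm_num : (1 / 18 : ℝ) < 1 / 9)] with y hy
    have he : exp (1 + y) < 9 := calc
      exp (1 + y) < exp 2 := exp_lt_exp.mpr (by linarith [hy.2])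
      _ = exp 1 ^ 2 := by rw [← exp_nat_mul]; norm_num
      _ < 9 := by nlinarith [exp_one_lt_d9, exp_pos 1]
    exact tsum_selfPowCoeff_mul_pow_of_small hy.1.le (by nlinarith [hy.1, hy.2])
  exact hlhs.eqOn_of_preconnected_of_eventuallyEq hrhs isPreconnected_Ioo
    (by norm_num) hsmall hx

lemma hasDerivAt_tsum_selfPowCoeff_mul_pow {w : ℝ} (hw : |w| < exp (-1)) :
    HasDerivAt (fun w => ∑' m : ℕ, selfPowCoeff m * w ^ m)
      (∑' m : ℕ, selfPowCoeff m * (m * w ^ (m - 1))) w := by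
  obtain ⟨r, hwr, hr⟩ := exists_between hw
  have hr0 : 0 < r := (abs_nonneg w).trans_lt hwr
  have hu : Summable fun m : ℕ => selfPowCoeff m * (m * r ^ (m - 1)) := by
    refine ((summable_pow_mul_selfPowCoeff_mul_pow 1 (by rwa [abs_of_pos hr0])).mul_left r⁻¹).congr
      fun m => ?_
    rcases eq_or_ne m 0 with rfl | hm
    · simp
    · rw [← mul_pow_sub_one hm r]; field_simp
  refine hasDerivAt_tsum_of_isPreconnected (t := Set.Ioo (-r) r) hu isOpen_Ioo isPreconnected_Ioo
    (fun m y _ => (hasDerivAt_pow m y).const_mul _) (fun m y hy => ?_) (abs_lt.mp hwr)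
    (by simpa using summable_pow_mul_selfPowCoeff_mul_pow 0 hw) (abs_lt.mp hwr)
  rw [norm_mul, norm_mul, norm_pow, Real.norm_natCast, Real.norm_eq_abs, Real.norm_eq_abs,
    abs_of_nonneg (selfPowCoeff_nonneg m)]
  gcongr
  · exact selfPowCoeff_nonneg m
  · exact (abs_lt.mpr hy).le

theorem tsum_natCast_mul_selfPowCoeff_mul_pow {x : ℝ} (hx : x ∈ Set.Ioo 0 1) :
    ∑' m : ℕ, (m : ℝ) * selfPowCoeff m * (x * exp (-x)) ^ m = x / (1 - x) ^ 3 := by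
  set G' := ∑' m : ℕ, selfPowCoeff m * (m * (x * exp (-x)) ^ (m - 1))
  have hz : HasDerivAt (fun x => x * exp (-x)) ((1 - x) * exp (-x)) x :=
    ((hasDerivAt_id' x).fun_mul (hasDerivAt_neg x).exp).congr_deriv (by ring)
  have hcomp := (hasDerivAt_tsum_selfPowCoeff_mul_pow (abs_mul_exp_neg_lt hx)).comp x hz
  have hrhs_deriv : HasDerivAt (fun x => ∑' m : ℕ, selfPowCoeff m * (x * exp (-x)) ^ m)
      ((1 - x) ^ 2)⁻¹ x := by
    refine ((((hasDerivAt_id x).const_sub 1).inv (sub_ne_zero.mpr hx.2.ne')).congr_of_eventuallyEq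
      ?_).congr_deriv (by simp)
    filter_upwards [Ioo_mem_nhds hx.1 hx.2] with y hy using tsum_selfPowCoeff_mul_pow hy
  have hG' : G' * ((1 - x) * exp (-x)) = ((1 - x) ^ 2)⁻¹ := hcomp.unique hrhs_deriv
  have h1x : 1 - x ≠ 0 := sub_ne_zero.mpr hx.2.ne'
  calc ∑' m : ℕ, (m : ℝ) * selfPowCoeff m * (x * exp (-x)) ^ m = x * exp (-x) * G' := by
        rw [← tsum_mul_left]
        refine tsum_congr fun m => ?_
        rcases eq_or_ne m 0 with rfl | hm
        · simp
        · rw [← mul_pow_sub_one hm (x * exp (-x))]; ring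
    _ = x / (1 - x) ^ 3 := by
        field_simp at hG' ⊢
        linear_combination x * hG'

noncomputable def interDecodePMF (lam : ℝ) (x : ℕ) : ℝ :=
  if x = 0 then Real.exp (-lam)
  else if x = 1 then lam * Real.exp (-lam)
  else (((x - 1 : ℕ) ^ (x - 2) : ℕ) : ℝ) / ((x : ℝ) * (Nat.factorial (x - 2)))
    * lam ^ x * Real.exp (-(x : ℝ) * lam)

lemma sq_mul_interDecodePMF_succ (lam : ℝ) (m : ℕ) :
    ((m + 1 : ℕ) : ℝ) ^ 2 * interDecodePMF lam (m + 1) = lam * exp (-lam) *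
      (selfPowCoeff m * (lam * exp (-lam)) ^ m + m * selfPowCoeff m * (lam * exp (-lam)) ^ m) := by
  rcases m with _ | k
  · simp [interDecodePMF, selfPowCoeff]
  · have hexp : exp (-((k + 1 + 1 : ℕ) : ℝ) * lam) = exp (-lam) * exp (-lam) ^ (k + 1) := by
      rw [← exp_nat_mul, ← exp_add]; push_cast; ring_nf
    simp only [interDecodePMF, selfPowCoeff, Nat.add_one_ne_zero, if_false,
      show k + 1 + 1 ≠ 1 by omega, show k + 1 + 1 - 1 = k + 1 by omega,
      show k + 1 + 1 - 2 = k by omega, hexp, Nat.factorial_succ]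
    push_cast
    field_simp
    ring

theorem tsum_sq_mul_interDecodePMF {lam : ℝ} (hlam : lam ∈ Set.Ioo 0 1) :
    ∑' x : ℕ, (x : ℝ) ^ 2 * interDecodePMF lam x
      = (1 - lam + lam ^ 2) / (1 - lam) ^ 3 * (lam * exp (-lam)) := by
  have hz := abs_mul_exp_neg_lt hlam
  have hshift : HasSum (fun m : ℕ => ((m + 1 : ℕ) : ℝ) ^ 2 * interDecodePMF lam (m + 1))
      (lam * exp (-lam) * ((1 - lam)⁻¹ + lam / (1 - lam) ^ 3)) := by
    simp only [sq_mul_interDecodePMF_succ]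
    refine .mul_left _ ?_
    rw [← tsum_selfPowCoeff_mul_pow hlam, ← tsum_natCast_mul_selfPowCoeff_mul_pow hlam]
    exact (by simpa using summable_pow_mul_selfPowCoeff_mul_pow 0 hz : Summable _).hasSum.add
      (by simpa using summable_pow_mul_selfPowCoeff_mul_pow 1 hz : Summable _).hasSum
  have h1lam : 1 - lam ≠ 0 := sub_ne_zero.mpr hlam.2.ne'
  rw [tsum_eq_zero_add' (f := fun x : ℕ => (x : ℝ) ^ 2 * interDecodePMF lam x) hshift.summable,
    hshift.tsum_eq]
  field_simp
  ring

/-- Second moment of the inter-decode-time distribution: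
`E[X²] = ((1-λ+λ²)/(1-λ)²) E[X] = ((1-λ+λ²)/(1-λ)³) λ e^{-λ}`. -/
theorem stmt3 (lam : ℝ) (h0 : 0 < lam) (h1 : lam < 1) :
    ∑' x : ℕ, (x : ℝ) ^ 2 *
      (if x = 0 then Real.exp (-lam)
       else if x = 1 then lam * Real.exp (-lam)
       else (((x - 1 : ℕ) ^ (x - 2) : ℕ) : ℝ) / ((x : ℝ) * (Nat.factorial (x - 2)))
            * lam ^ x * Real.exp (-(x : ℝ) * lam))
      = ((1 - lam + lam ^ 2) / (1 - lam) ^ 2) * ((lam / (1 - lam)) * Real.exp (-lam)) ∧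
    ((1 - lam + lam ^ 2) / (1 - lam) ^ 2) * ((lam / (1 - lam)) * Real.exp (-lam))
      = ((1 - lam + lam ^ 2) / (1 - lam) ^ 3) * (lam * Real.exp (-lam)) := by
  have h1lam : 1 - lam ≠ 0 := sub_ne_zero.mpr h1.ne'
  have hmoment := tsum_sq_mul_interDecodePMF ⟨h0, h1⟩
  exact ⟨hmoment.trans (by field_simp), by field_simp⟩
end

section
/- For any integer x ≥ 2, the Abel-type binomial sum ∑_{y=2}^{x} ((y-1)/(y!)) · ((x-1)^{x-y-1}/(x-y)!) equals (x-1)^{x-2}/(x·(x-2)!). -/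
/-!
Multiplying by `x! (x - 1)` turns the sum into `∑_{y=2}^{x} (y-1) C(x,y) a^{x-y}` with `a = x - 1`.
Extended to `y = 0, 1` (contributing `-a^x` and `0`), this is the derivative of the binomial
theorem minus the binomial theorem itself, `x (1+a)^{x-1} - (1+a)^x`, which vanishes exactly
because `1 + a = x`.
-/

open Finset

section BinomialSums

variable {R : Type*}

theorem sum_range_choose_mul_pow [CommSemiring R] (n : ℕ) (a : R) :
    ∑ k ∈ range (n + 1), (n.choose k : R) * a ^ (n - k) = (1 + a) ^ n := by
  rw [add_pow]
  exact sum_congr rfl fun k _ => by rw [one_pow, one_mul, mul_comm]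

theorem sum_range_mul_choose_mul_pow [CommSemiring R] (n : ℕ) (a : R) :
    ∑ k ∈ range (n + 1), (k : R) * n.choose k * a ^ (n - k) = n * (1 + a) ^ (n - 1) := by
  cases n with
  | zero => simp
  | succ m =>
    have shift (k : ℕ) : ((k + 1 : ℕ) : R) * (m + 1).choose (k + 1) * a ^ (m + 1 - (k + 1))
        = (m + 1 : R) * (m.choose k * a ^ (m - k)) := by
      rw [Nat.add_sub_add_right, ← mul_assoc, mul_comm ((k + 1 : ℕ) : R), ← Nat.cast_mul,
        ← Nat.add_one_mul_choose_eq]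
      push_cast
      ring
    rw [sum_range_succ', sum_congr rfl fun k _ => shift k, ← mul_sum, sum_range_choose_mul_pow]
    simp

theorem sum_range_sub_one_mul_choose_mul_pow [CommRing R] (n : ℕ) (a : R) :
    ∑ k ∈ range (n + 1), ((k : R) - 1) * n.choose k * a ^ (n - k)
      = n * (1 + a) ^ (n - 1) - (1 + a) ^ n := by
  simp only [sub_mul, one_mul, sum_sub_distrib, sum_range_mul_choose_mul_pow,
    sum_range_choose_mul_pow]

theorem sum_Icc_two_sub_one_mul_choose_mul_pow [CommRing R] {n : ℕ} (hn : 1 ≤ n) :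
    ∑ k ∈ Icc 2 n, ((k : R) - 1) * n.choose k * ((n : R) - 1) ^ (n - k) = ((n : R) - 1) ^ n := by
  have h := sum_range_sub_one_mul_choose_mul_pow n ((n : R) - 1)
  rw [add_sub_cancel, mul_pow_sub_one (by omega), sub_self,
    ← sum_range_add_sum_Ico _ (by omega : 2 ≤ n + 1), Ico_add_one_right_eq_Icc] at h
  simp only [sum_range_succ, sum_range_zero] at h
  simp only [Nat.cast_zero, Nat.cast_one, Nat.choose_zero_right, Nat.sub_zero, sub_self] at h
  linear_combination h

end BinomialSums

theorem div_factorial_mul_zpow_div_factorial {K : Type*} [Field K] [CharZero K] {a : K}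
    (ha : a ≠ 0) {x y : ℕ} (hyx : y ≤ x) (c : K) :
    c / y.factorial * (a ^ ((x : ℤ) - y - 1) / (x - y).factorial)
      = c * x.choose y * a ^ (x - y) / (x.factorial * a) := by
  have hfac : (x.factorial : K) ≠ 0 := Nat.cast_ne_zero.2 x.factorial_ne_zero
  rw [zpow_sub_one₀ ha, ← Nat.cast_sub hyx, zpow_natCast, Nat.cast_choose K hyx]
  field_simp

/-- Abel-type binomial identity: for integers `x ≥ 2`,
`∑_{y=2}^{x} ((y-1)/y!) ((x-1)^{x-y-1}/(x-y)!) = (x-1)^{x-2}/(x (x-2)!)`,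
where the exponent `x - y - 1` (which equals `-1` at `y = x`) is an integer power. -/
theorem stmt6 (x : ℕ) (hx : 2 ≤ x) :
    ∑ y ∈ Finset.Icc 2 x,
      (((y : ℝ) - 1) / (Nat.factorial y))
        * (((x : ℝ) - 1) ^ ((x : ℤ) - (y : ℤ) - 1) / (Nat.factorial (x - y)))
    = ((x : ℝ) - 1) ^ (x - 2) / ((x : ℝ) * (Nat.factorial (x - 2))) := by
  have ha : (x : ℝ) - 1 ≠ 0 := by
    rw [sub_ne_zero]
    exact_mod_cast (by omega : x ≠ 1)
  rw [sum_congr rfl fun y hy => div_factorial_mul_zpow_div_factorial ha (mem_Icc.1 hy).2 _,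
    ← sum_div, sum_Icc_two_sub_one_mul_choose_mul_pow (by omega)]
  obtain ⟨m, rfl⟩ : ∃ m, x = m + 2 := ⟨x - 2, by omega⟩
  rw [Nat.add_sub_cancel, Nat.factorial_succ, Nat.factorial_succ]
  push_cast
  rw [show (m : ℝ) + 2 - 1 = m + 1 by ring]
  field_simp
  ring
end
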